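/- For every r ∈ (0,1), the integral over the open unit disc 𝔻 ⊆ ℂ of the function ζ ↦ max(log(r/|ζ|), 0) · 4/(1−|ζ|²)² with respect to planar Lebesgue measure equals −2π·log(1−r²). -/

import Mathlib

/-!
In polar coordinates the integral becomes `2π ∫₀^r (log r - log y) · 4y / (1 - y²)² dy`, and
`y ↦ (log r - log y) · 2y² / (1 - y²) - log (1 - y²)` is a primitive of this integrand which
vanishes at `0` (where `y² log y → 0`) and equals `-log (1 - r²)` at `r`.
-/

open MeasureTheory Set Real

theorem Complex.integral_fun_norm {F : Type*} [NormedAddCommGroup F] [NormedSpace ℝ F]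
    (f : ℝ → F) : ∫ z : ℂ, f ‖z‖ = (2 * π) • ∫ y in Ioi (0 : ℝ), y • f y := by
  have hball : volume.real (Metric.ball (0 : ℂ) 1) = π := by
    simp [Measure.real, Complex.volume_ball]
  rw [integral_fun_norm_addHaar volume f, Complex.finrank_real_complex, hball,
    ← smul_assoc, nsmul_eq_mul, Nat.cast_ofNat]
  norm_num

lemma max_log_div_eq_zero {r s : ℝ} (hr : 0 ≤ r) (hrs : r ≤ s) : max (log (r / s)) 0 = 0 :=
  max_eq_right <| log_nonpos (div_nonneg hr (hr.trans hrs)) (div_le_one_of_le₀ hrs (hr.trans hrs))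

lemma max_log_div_eq_log_sub_log {r s : ℝ} (hs : 0 < s) (hsr : s ≤ r) :
    max (log (r / s)) 0 = log r - log s := by
  rw [max_eq_left <| log_nonneg <| (le_div_iff₀ hs).2 (by linarith),
    log_div (hs.trans_le hsr).ne' hs.ne']

noncomputable def poincareMassPrimitive (r y : ℝ) : ℝ :=
  (log r - log y) * (2 * y ^ 2 / (1 - y ^ 2)) - log (1 - y ^ 2)

-- The derivative of `-log (1 - y²)` cancels the term in which `log y` is differentiated.
lemma hasDerivAt_poincareMassPrimitive (r : ℝ) {x : ℝ} (hx : 0 < x) (hx1 : 1 - x ^ 2 ≠ 0) :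
    HasDerivAt (poincareMassPrimitive r) ((log r - log x) * (4 * x / (1 - x ^ 2) ^ 2)) x := by
  have hsq : HasDerivAt (fun y : ℝ => 1 - y ^ 2) (-(2 * x)) x := by
    simpa using (hasDerivAt_pow 2 x).const_sub 1
  have hlog : HasDerivAt (fun y : ℝ => log r - log y) (-x⁻¹) x := by
    simpa using (hasDerivAt_log hx.ne').const_sub (log r)
  have hnum : HasDerivAt (fun y : ℝ => 2 * y ^ 2) (2 * (2 * x)) x := by
    simpa using (hasDerivAt_pow 2 x).const_mul 2
  have hfrac : HasDerivAt (fun y : ℝ => 2 * y ^ 2 / (1 - y ^ 2))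
      ((2 * (2 * x) * (1 - x ^ 2) - 2 * x ^ 2 * -(2 * x)) / (1 - x ^ 2) ^ 2) x :=
    hnum.div hsq hx1
  refine ((hlog.mul hfrac).sub (hsq.log hx1)).congr_deriv ?_
  field_simp
  ring

lemma continuousAt_poincareMassPrimitive (r : ℝ) {x : ℝ} (hx1 : 1 - x ^ 2 ≠ 0) :
    ContinuousAt (poincareMassPrimitive r) x := by
  -- `y * log y` is continuous at `0`, whereas `log y` is not.
  have hform : poincareMassPrimitive r = fun y =>
      log r * (2 * y ^ 2 / (1 - y ^ 2)) - y * log y * (2 * y / (1 - y ^ 2)) - log (1 - y ^ 2) := by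
    funext y
    simp only [poincareMassPrimitive]
    ring
  rw [hform]
  have hsq : ContinuousAt (fun y : ℝ => 1 - y ^ 2) x := by fun_prop
  exact ((continuousAt_const.mul ((by fun_prop : ContinuousAt (fun y : ℝ => 2 * y ^ 2) x).div
    hsq hx1)).sub (continuous_mul_log.continuousAt.mul
      ((by fun_prop : ContinuousAt (fun y : ℝ => 2 * y) x).div hsq hx1))).sub (hsq.log hx1)

theorem integral_log_sub_log_mul_poincare {r : ℝ} (hr0 : 0 < r) (hr1 : r < 1) :
    ∫ y in (0 : ℝ)..r, (log r - log y) * (4 * y / (1 - y ^ 2) ^ 2) = -log (1 - r ^ 2) := by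
  have hne : ∀ y ∈ Icc (0 : ℝ) r, 1 - y ^ 2 ≠ 0 := fun y hy => by
    nlinarith [hy.1, hy.2]
  have hcont : ContinuousOn (poincareMassPrimitive r) (Icc 0 r) := fun y hy =>
    (continuousAt_poincareMassPrimitive r (hne y hy)).continuousWithinAt
  have hderiv : ∀ y ∈ Ioo 0 r, HasDerivAt (poincareMassPrimitive r)
      ((log r - log y) * (4 * y / (1 - y ^ 2) ^ 2)) y := fun y hy =>
    hasDerivAt_poincareMassPrimitive r hy.1 (hne y (Ioo_subset_Icc_self hy))
  have hnonneg : ∀ y ∈ Ioo 0 r, 0 ≤ (log r - log y) * (4 * y / (1 - y ^ 2) ^ 2) := fun y hy =>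
    mul_nonneg (sub_nonneg.2 (log_le_log hy.1 hy.2.le)) (by have := hy.1; positivity)
  rw [intervalIntegral.integral_eq_sub_of_hasDerivAt_of_le hr0.le hcont hderiv
    ((intervalIntegrable_iff_integrableOn_Ioc_of_le hr0.le).2
      (intervalIntegral.integrableOn_deriv_of_nonneg hcont hderiv hnonneg))]
  simp [poincareMassPrimitive]

theorem stmt_6 (r : ℝ) (hr : r ∈ Set.Ioo (0 : ℝ) 1) :
    ∫ ζ in {z : ℂ | ‖z‖ < 1},
        max (Real.log (r / ‖ζ‖)) 0 * (4 / (1 - ‖ζ‖ ^ 2) ^ 2) =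
      -(2 * Real.pi * Real.log (1 - r ^ 2)) := by
  obtain ⟨hr0, hr1⟩ := hr
  set f : ℝ → ℝ := fun s => max (log (r / s)) 0 * (4 / (1 - s ^ 2) ^ 2)
  have hdisc : ∫ ζ in {z : ℂ | ‖z‖ < 1}, f ‖ζ‖ = ∫ ζ : ℂ, f ‖ζ‖ :=
    setIntegral_eq_integral_of_forall_compl_eq_zero fun ζ hζ => by
      simp only [f, max_log_div_eq_zero hr0.le (hr1.le.trans (not_lt.1 hζ)), zero_mul]
  have hradial : ∫ y in Ioi (0 : ℝ), y • f y =
      ∫ y in (0 : ℝ)..r, (log r - log y) * (4 * y / (1 - y ^ 2) ^ 2) := by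
    rw [intervalIntegral.integral_of_le hr0.le, setIntegral_eq_of_subset_of_forall_sdiff_eq_zero
      measurableSet_Ioi Ioc_subset_Ioi_self fun y (hy : y ∈ Ioi 0 \ Ioc 0 r) => ?_]
    · refine setIntegral_congr_fun measurableSet_Ioc fun y ⟨hy0, hyr⟩ => ?_
      simp only [f, smul_eq_mul, max_log_div_eq_log_sub_log hy0 hyr]
      ring
    · have hry : r < y := lt_of_not_ge fun h => hy.2 ⟨hy.1, h⟩
      simp [f, max_log_div_eq_zero hr0.le hry.le]
  rw [hdisc, Complex.integral_fun_norm, hradial, integral_log_sub_log_mul_poincare hr0 hr1,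
    smul_eq_mul]
  ring
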